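/- Let C be a category, let K be a small category such that C has colimits of shape K, let F : Cᵒᵖ ⥤ Type be a presheaf, and let E := CostructuredArrow yoneda F be its category of elements with projection p : E ⥤ C. Then the following are equivalent: (1) E admits colimits of shape K, and a cocone over a K-shaped diagram in E is a colimit cocone if and only if its image under p is a colimit cocone in C; (2) F preserves limits of shape Kᵒᵖ (i.e., F sends colimit cocones of K-shaped diagrams in C to limit cones in Type). -/

import Mathlib

/-!
An object of `CostructuredArrow yoneda F` over `X` is an element of `F X`, so a cocone over
`D : K ⥤ CostructuredArrow yoneda F` lying over a cocone `c` in `C` is the same as an element of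
`F c.pt` restricting to the elements `element (D.obj k)`, i.e. a point of the cone
`F.mapCone c.op` over the section of `D.op ⋙ F` given by `D`.

If `F` sends the colimit cocone `c` to a limit cone, this point exists and is unique, and the
lifted cocone is a colimit: so the projection creates colimits. Conversely, every section `s`
of `D.op ⋙ F` is the section of a lifted diagram over `D`. A colimit of that diagram yields a
point over `s`. Two points over `s` give two lifts of `c`, which are colimits since the
projection reflects colimits; the comparison map between them lies over the identity of `c.pt`,
so the two points agree.
-/

open CategoryTheory Limits

universe w' w v u

namespace CategoryTheory.CostructuredArrow

open Opposite

variable {C : Type u} [Category.{v} C] {F : Cᵒᵖ ⥤ Type v}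

noncomputable def element (e : CostructuredArrow yoneda F) : F.obj (op e.left) :=
  yonedaEquiv e.hom

@[simp]
lemma element_mk {X : C} (x : F.obj (op X)) : element (mk (yonedaEquiv.symm x)) = x := by
  simp [element]

lemma map_element {e e' : CostructuredArrow yoneda F} (f : e ⟶ e') :
    F.map f.left.op (element e') = element e := by
  rw [element, yonedaEquiv_naturality, w f, element]

lemma map_map_element {e e' : CostructuredArrow yoneda F} (f : e ⟶ e') {X : C} (g : e.left ⟶ X)
    (h : X ⟶ e'.left) (hgh : g ≫ h = f.left) :
    F.map g.op (F.map h.op (element e')) = element e := by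
  rw [← map_element f, ← hgh, op_comp, Functor.map_comp_apply]

noncomputable def homOfMapElement {e e' : CostructuredArrow yoneda F} (g : e.left ⟶ e'.left)
    (h : F.map g.op (element e') = element e) : e ⟶ e' :=
  homMk g (yonedaEquiv.injective (by rw [← yonedaEquiv_naturality]; exact h))

variable {K : Type w} [Category.{w'} K] {D : K ⥤ CostructuredArrow yoneda F}

noncomputable def liftCocone (c : Cocone (D ⋙ proj yoneda F)) (y : F.obj (op c.pt))
    (hy : ∀ k, F.map (c.ι.app k).op y = element (D.obj k)) : Cocone D where
  pt := mk (yonedaEquiv.symm y)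
  ι.app k := homOfMapElement (e := D.obj k) (e' := mk (yonedaEquiv.symm y)) (c.ι.app k)
    (by rw [element_mk]; exact hy k)
  ι.naturality _ _ f := hom_ext _ _ ((c.w f).trans (Category.comp_id _).symm)

noncomputable def isColimitOfIsLimitMapConeOp (s : Cocone D)
    (hs : IsColimit ((proj yoneda F).mapCocone s))
    (hl : IsLimit (F.mapCone ((proj yoneda F).mapCocone s).op)) : IsColimit s where
  desc t := homOfMapElement (hs.desc ((proj yoneda F).mapCocone t)) <|
    Types.isLimitEquivSections hl |>.injective <| Subtype.ext <| funext fun k =>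
      (map_map_element (t.ι.app k.unop) _ _ (hs.fac _ k.unop)).trans (map_element _).symm
  fac t k := hom_ext _ _ (hs.fac ((proj yoneda F).mapCocone t) k)
  uniq t m hm := hom_ext _ _ <|
    hs.uniq ((proj yoneda F).mapCocone t) m.left fun k => congrArg CommaMorphism.left (hm k)

lemma eq_of_map_eq_element [ReflectsColimit D (proj yoneda F)]
    {c : Cocone (D ⋙ proj yoneda F)} (hc : IsColimit c) {x₁ x₂ : F.obj (op c.pt)}
    (h₁ : ∀ k, F.map (c.ι.app k).op x₁ = element (D.obj k))
    (h₂ : ∀ k, F.map (c.ι.app k).op x₂ = element (D.obj k)) : x₁ = x₂ := by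
  obtain ⟨hl₂⟩ := ReflectsColimit.reflects (F := proj yoneda F) (c := liftCocone c x₂ h₂) hc
  let m := hl₂.desc (liftCocone c x₁ h₁)
  have hm : m.left = 𝟙 _ := hc.hom_ext fun k =>
    (congrArg CommaMorphism.left (hl₂.fac (liftCocone c x₁ h₁) k)).trans (Category.comp_id _).symm
  have h := map_element m
  simp [hm, liftCocone] at h
  exact h

lemma exists_map_eq_element {c : Cocone (D ⋙ proj yoneda F)} (hc : IsColimit c) (t : Cocone D) :
    ∃ y : F.obj (op c.pt), ∀ k, F.map (c.ι.app k).op y = element (D.obj k) :=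
  ⟨F.map (hc.desc ((proj yoneda F).mapCocone t)).op (element t.pt), fun k =>
    map_map_element (t.ι.app k) _ _ (hc.fac ((proj yoneda F).mapCocone t) k)⟩

@[reducible]
noncomputable def createsColimitsOfShapeProj
    (hF : ∀ (D : K ⥤ C) (c : Cocone D), IsColimit c → Nonempty (IsLimit (F.mapCone c.op))) :
    CreatesColimitsOfShape K (proj yoneda F) where
  CreatesColimit {D} := createsColimitOfReflectsIso fun c hc =>
    let hl := (hF _ c hc).some
    let y := (Types.isLimitEquivSections hl).symm
      ⟨fun k => element (D.obj k.unop), fun f => map_element (D.map f.unop)⟩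
    have hy : ∀ k, F.map (c.ι.app k).op y = element (D.obj k) := fun k =>
      Types.isLimitEquivSections_symm_apply hl _ (op k)
    { liftedCocone := liftCocone c y hy
      validLift := Iso.refl _
      makesColimit := isColimitOfIsLimitMapConeOp _ hc hl }

noncomputable def liftDiagram (D : K ⥤ C) (s : (D.op ⋙ F).sections) :
    K ⥤ CostructuredArrow yoneda F where
  obj k := mk (yonedaEquiv.symm (s.1 (op k)))
  map f := homOfMapElement (D.map f) (by simpa using s.2 f.op)
  map_id k := hom_ext _ _ (D.map_id k)
  map_comp f g := hom_ext _ _ (D.map_comp f g)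

lemma nonempty_isLimit_mapCone_op [HasColimitsOfShape K (CostructuredArrow yoneda F)]
    [ReflectsColimitsOfShape K (proj yoneda F)] {D : K ⥤ C} {c : Cocone D} (hc : IsColimit c) :
    Nonempty (IsLimit (F.mapCone c.op)) := by
  refine (Types.isLimit_iff _).2 fun s hs => ?_
  let D' := liftDiagram D ⟨s, hs⟩
  have hs' : ∀ k, s (op k) = element (D'.obj k) := fun k => (element_mk _).symm
  -- `D' ⋙ proj yoneda F` is `D` by definition, so `hc` is a colimit of it.
  obtain ⟨y, hy⟩ := exists_map_eq_element (D := D') hc (colimit.cocone D')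
  refine ⟨y, fun k => (hy k.unop).trans (hs' k.unop).symm, fun x hx => ?_⟩
  exact eq_of_map_eq_element (D := D') hc (fun k => (hx (op k)).trans (hs' k)) hy

end CategoryTheory.CostructuredArrow

open CategoryTheory.CostructuredArrow

theorem statement14 {C : Type u} [Category.{v} C] {K : Type w} [Category.{w'} K]
    [HasColimitsOfShape K C] (F : Cᵒᵖ ⥤ Type v) :
    (HasColimitsOfShape K (CostructuredArrow yoneda F) ∧
      ∀ (D : K ⥤ CostructuredArrow yoneda F) (c : Cocone D),
        (Nonempty (IsColimit c) ↔
          Nonempty (IsColimit ((CostructuredArrow.proj yoneda F).mapCocone c)))) ↔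
      (∀ (D : K ⥤ C) (c : Cocone D), IsColimit c →
        Nonempty (IsLimit (F.mapCone c.op))) := by
  constructor
  · rintro ⟨_, hiff⟩ D c hc
    have : ReflectsColimitsOfShape K (CostructuredArrow.proj yoneda F) :=
      ⟨⟨fun h => (hiff _ _).2 ⟨h⟩⟩⟩
    exact nonempty_isLimit_mapCone_op hc
  · intro hF
    have := createsColimitsOfShapeProj hF
    exact ⟨hasColimitsOfShape_of_hasColimitsOfShape_createsColimitsOfShape
      (CostructuredArrow.proj yoneda F), fun D c => ⟨fun ⟨h⟩ => ⟨isColimitOfPreserves _ h⟩,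
      fun ⟨h⟩ => ⟨isColimitOfReflects _ h⟩⟩⟩
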